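/- arXiv:1101.3958 — 2 statements merged into one kernel-verified Lean document; each statement's English description precedes it below -/
import Mathlib

section
/- Let R be a probability measure on a measurable space Ω and let P be a probability measure on Ω with P ≪ R. Then the supremum, over all measurable functions u : Ω → ℝ that are P-essentially bounded (i.e. ‖u‖_{L^∞(P)} < ∞), of ∫ u dP − log ∫ e^u dR (where log ∫ e^u dR is taken in (−∞, ∞], with the convention that the difference is −∞ when ∫ e^u dR = ∞) equals the relative entropy H(P|R) ∈ [0, ∞]. -/
/-!
Upper bound: if `∫ e^u dR < ∞`, tilting `R` by `u` gives a probability measure `R^u` with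
`P ≪ R^u`, and Gibbs' inequality `0 ≤ H(P|R^u) = H(P|R) - ∫ u dP + log ∫ e^u dR` rearranges
to the bound.

Lower bound: truncating `log (dP/dR)` to `[-n, n]` (and setting it to `-n` where `dP/dR = 0`)
gives bounded test functions `uₙ` with `∫ e^{uₙ} dR ≤ 1 + e^{-n}` and
`uₙ ≥ min (log (dP/dR)) n` `P`-a.e. The negative part of `log (dP/dR)` is `P`-integrable, being
dominated by `e^{-log (dP/dR)} = dR/dP`, so by monotone convergence
`∫ min (log (dP/dR)) n dP → H(P|R)`, whether or not `H(P|R)` is finite.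
-/

open MeasureTheory Real Filter Classical
open scoped ENNReal Topology

/-- Relative entropy `H(P|R) ∈ [0,∞]`: the integral `∫ log(dP/dR) dP` if `P ≪ R`
(with value `+∞` when `log(dP/dR)` is not `P`-integrable), and `+∞` otherwise. -/
noncomputable def relEntropy {Ω : Type*} [MeasurableSpace Ω] (P R : Measure Ω) : EReal :=
  if P ≪ R ∧ Integrable (llr P R) P then ((∫ ω, llr P R ω ∂P : ℝ) : EReal) else ⊤

section MonotoneConvergence

variable {α : Type*} [MeasurableSpace α] {μ : Measure α} {f : ℕ → α → ℝ} {F : α → ℝ}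

theorem integrable_of_tendsto_of_monotone_of_integral_le (hf : ∀ n, Integrable (f n) μ)
    (h_mono : ∀ᵐ x ∂μ, Monotone fun n ↦ f n x)
    (h_tendsto : ∀ᵐ x ∂μ, Tendsto (fun n ↦ f n x) atTop (𝓝 (F x)))
    {C : ℝ} (h_le : ∀ n, ∫ x, f n x ∂μ ≤ C) : Integrable F μ := by
  have hF_meas : AEStronglyMeasurable F μ :=
    aestronglyMeasurable_of_tendsto_ae _ (fun n ↦ (hf n).1) h_tendsto
  have h_nonneg : 0 ≤ᵐ[μ] fun x ↦ F x - f 0 x := by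
    filter_upwards [h_tendsto, h_mono] with x hx hx_mono
    exact sub_nonneg.2 (ge_of_tendsto' hx fun n ↦ hx_mono (Nat.zero_le n))
  have h_lim : Tendsto (fun n ↦ ∫⁻ x, ENNReal.ofReal (f n x - f 0 x) ∂μ) atTop
      (𝓝 (∫⁻ x, ENNReal.ofReal (F x - f 0 x) ∂μ)) := by
    refine lintegral_tendsto_of_tendsto_of_monotone
      (fun n ↦ ((hf n).sub (hf 0)).aemeasurable.ennreal_ofReal) ?_ ?_
    · filter_upwards [h_mono] with x hx n m hnm
      exact ENNReal.ofReal_le_ofReal (sub_le_sub_right (hx hnm) _)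
    · filter_upwards [h_tendsto] with x hx
      exact (ENNReal.continuous_ofReal.tendsto _).comp (hx.sub_const _)
  have h_bound : ∫⁻ x, ENNReal.ofReal (F x - f 0 x) ∂μ ≤ ENNReal.ofReal (C - ∫ x, f 0 x ∂μ) := by
    refine le_of_tendsto' h_lim fun n ↦ ?_
    rw [← ofReal_integral_eq_lintegral_ofReal (f := fun x ↦ f n x - f 0 x) ((hf n).sub (hf 0)),
      integral_sub (hf n) (hf 0)]
    · exact ENNReal.ofReal_le_ofReal (sub_le_sub_right (h_le n) _)
    · filter_upwards [h_mono] with x hx using sub_nonneg.2 (hx (Nat.zero_le n))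
  have h_sub : Integrable (fun x ↦ F x - f 0 x) μ :=
    (lintegral_ofReal_ne_top_iff_integrable (hF_meas.sub (hf 0).1) h_nonneg).1
      (ne_top_of_le_ne_top ENNReal.ofReal_ne_top h_bound)
  exact (h_sub.add (hf 0)).congr (ae_of_all _ fun x ↦ sub_add_cancel (F x) (f 0 x))

theorem tendsto_ereal_integral_of_monotone (hf : ∀ n, Integrable (f n) μ)
    (h_mono : ∀ᵐ x ∂μ, Monotone fun n ↦ f n x)
    (h_tendsto : ∀ᵐ x ∂μ, Tendsto (fun n ↦ f n x) atTop (𝓝 (F x))) :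
    Tendsto (fun n ↦ ((∫ x, f n x ∂μ : ℝ) : EReal)) atTop
      (𝓝 (if Integrable F μ then ((∫ x, F x ∂μ : ℝ) : EReal) else ⊤)) := by
  split_ifs with hF
  · exact EReal.tendsto_coe.2 (integral_tendsto_of_tendsto_of_monotone hf hF h_mono h_tendsto)
  · refine EReal.tendsto_coe_nhds_top_iff.2 (tendsto_atTop_atTop_of_monotone' ?_ ?_)
    · exact fun n m hnm ↦ integral_mono_ae (hf n) (hf m) (h_mono.mono fun x hx ↦ hx hnm)
    · rintro ⟨C, hC⟩
      exact hF (integrable_of_tendsto_of_monotone_of_integral_le hf h_mono h_tendsto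
        fun n ↦ hC ⟨n, rfl⟩)

end MonotoneConvergence

theorem integrable_min_of_integrable_exp_neg {α : Type*} [MeasurableSpace α] {μ : Measure α}
    [IsFiniteMeasure μ] {g : α → ℝ} (hg : AEStronglyMeasurable g μ)
    (h_exp : Integrable (fun x ↦ exp (-g x)) μ) (c : ℝ) :
    Integrable (fun x ↦ min (g x) c) μ := by
  refine ((integrable_const |c|).add h_exp).mono' (hg.inf aestronglyMeasurable_const) ?_
  refine ae_of_all _ fun x ↦ ?_
  show ‖min (g x) c‖ ≤ |c| + exp (-g x)
  have h_neg : -g x ≤ exp (-g x) := by linarith [add_one_le_exp (-g x)]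
  rw [Real.norm_eq_abs, abs_le]
  constructor
  · rcases min_cases (g x) c with ⟨h, -⟩ | ⟨h, -⟩ <;> rw [h]
    · linarith [abs_nonneg c]
    · linarith [neg_abs_le c, exp_pos (-g x)]
  · linarith [min_le_right (g x) c, le_abs_self c, exp_pos (-g x)]

section TruncLog

/-- At `t = 0` the value `-c`, rather than the clamped junk value `log 0 = 0`, is what makes
`exp (truncLog c t) ≤ t + exp (-c)` hold. -/
noncomputable def truncLog (c t : ℝ) : ℝ :=
  if t = 0 then -c else max (min (log t) c) (-c)

lemma measurable_truncLog (c : ℝ) : Measurable (truncLog c) :=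
  Measurable.ite (measurableSet_singleton 0) measurable_const
    ((measurable_log.min measurable_const).max measurable_const)

lemma abs_truncLog_le {c : ℝ} (hc : 0 ≤ c) (t : ℝ) : |truncLog c t| ≤ c := by
  unfold truncLog
  split_ifs
  · rw [abs_neg, abs_of_nonneg hc]
  · exact abs_le.2 ⟨le_max_right _ _, max_le (min_le_right _ _) (by linarith)⟩

lemma min_log_le_truncLog (c : ℝ) {t : ℝ} (ht : t ≠ 0) : min (log t) c ≤ truncLog c t := by
  rw [truncLog, if_neg ht]
  exact le_max_left _ _

lemma exp_truncLog_le (c : ℝ) {t : ℝ} (ht : 0 ≤ t) : exp (truncLog c t) ≤ t + exp (-c) := by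
  unfold truncLog
  split_ifs with h
  · simp [h]
  · calc exp (max (min (log t) c) (-c)) ≤ exp (max (log t) (-c)) :=
          exp_le_exp.2 (max_le_max_right _ (min_le_left _ _))
      _ = max t (exp (-c)) := by
          rw [exp_monotone.map_max, exp_log (lt_of_le_of_ne ht (Ne.symm h))]
      _ ≤ t + exp (-c) :=
          max_le (le_add_of_nonneg_right (exp_pos _).le) (le_add_of_nonneg_left ht)

end TruncLog

section RelEntropy

variable {Ω : Type*} [MeasurableSpace Ω] {P R : Measure Ω}

lemma relEntropy_of_absolutelyContinuous (hPR : P ≪ R) :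
    relEntropy P R = if Integrable (llr P R) P then ((∫ ω, llr P R ω ∂P : ℝ) : EReal) else ⊤ := by
  simp [relEntropy, hPR]

lemma measurable_truncLog_rnDeriv (P R : Measure Ω) (c : ℝ) :
    Measurable fun ω ↦ truncLog c (P.rnDeriv R ω).toReal :=
  (measurable_truncLog c).comp (Measure.measurable_rnDeriv P R).ennreal_toReal

lemma memLp_top_truncLog_rnDeriv {μ : Measure Ω} {c : ℝ} (hc : 0 ≤ c) :
    MemLp (fun ω ↦ truncLog c (P.rnDeriv R ω).toReal) ⊤ μ :=
  memLp_top_of_bound (measurable_truncLog_rnDeriv P R c).aestronglyMeasurable c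
    (ae_of_all _ fun _ ↦ abs_truncLog_le hc _)

section Finite

variable [IsFiniteMeasure P] [IsFiniteMeasure R]

lemma integrable_exp_neg_llr (hPR : P ≪ R) :
    Integrable (fun ω ↦ exp (-llr P R ω)) P :=
  Measure.integrable_toReal_rnDeriv.congr (exp_neg_llr hPR).symm

lemma integral_min_llr_le_integral_truncLog (hPR : P ≪ R) {c : ℝ} (hc : 0 ≤ c) :
    ∫ ω, min (llr P R ω) c ∂P ≤ ∫ ω, truncLog c (P.rnDeriv R ω).toReal ∂P := by
  refine integral_mono_ae ?_ ((memLp_top_truncLog_rnDeriv hc).integrable le_top) ?_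
  · exact integrable_min_of_integrable_exp_neg (measurable_llr P R).aestronglyMeasurable
      (integrable_exp_neg_llr hPR) c
  · filter_upwards [Measure.rnDeriv_pos hPR, hPR.ae_le (Measure.rnDeriv_lt_top P R)]
      with ω h_pos h_lt
    exact min_log_le_truncLog c (ENNReal.toReal_pos h_pos.ne' h_lt.ne).ne'

lemma tendsto_integral_min_llr (hPR : P ≪ R) :
    Tendsto (fun n : ℕ ↦ ((∫ ω, min (llr P R ω) n ∂P : ℝ) : EReal)) atTop
      (𝓝 (relEntropy P R)) := by
  rw [relEntropy_of_absolutelyContinuous hPR]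
  refine tendsto_ereal_integral_of_monotone (fun n ↦ integrable_min_of_integrable_exp_neg
    (measurable_llr P R).aestronglyMeasurable (integrable_exp_neg_llr hPR) n)
    (ae_of_all _ fun ω n m hnm ↦ min_le_min_left _ (Nat.cast_le.2 hnm))
    (ae_of_all _ fun ω ↦ tendsto_const_nhds.congr' ?_)
  filter_upwards [eventually_ge_atTop ⌈llr P R ω⌉₊] with n hn
  exact (min_eq_left ((Nat.le_ceil _).trans (Nat.cast_le.2 hn))).symm

lemma tendsto_integral_min_llr_sub_log (hPR : P ≪ R) :
    Tendsto (fun n : ℕ ↦ ((∫ ω, min (llr P R ω) n ∂P - log (1 + exp (-n)) : ℝ) : EReal)) atTop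
      (𝓝 (relEntropy P R)) := by
  have h_exp : Tendsto (fun n : ℕ ↦ 1 + exp (-(n : ℝ))) atTop (𝓝 (1 + 0)) :=
    tendsto_const_nhds.add (tendsto_exp_neg_atTop_nhds_zero.comp tendsto_natCast_atTop_atTop)
  have h_log : Tendsto (fun n : ℕ ↦ ((-log (1 + exp (-(n : ℝ))) : ℝ) : EReal)) atTop (𝓝 0) := by
    simpa using EReal.tendsto_coe.2 ((continuousAt_log (by norm_num)).tendsto.comp h_exp).neg
  have h_add := (EReal.continuousAt_add (p := (relEntropy P R, 0)) (Or.inr (by simp))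
    (Or.inr (by simp))).tendsto.comp ((tendsto_integral_min_llr hPR).prodMk_nhds h_log)
  simpa [Function.comp_def, sub_eq_add_neg] using h_add

end Finite

variable [IsProbabilityMeasure P] [IsProbabilityMeasure R]

lemma integral_sub_log_integral_exp_le_integral_llr (hPR : P ≪ R) (h_llr : Integrable (llr P R) P)
    {u : Ω → ℝ} (hu : Integrable u P) (hu_exp : Integrable (fun ω ↦ exp (u ω)) R) :
    ∫ ω, u ω ∂P - log (∫ ω, exp (u ω) ∂ R) ≤ ∫ ω, llr P R ω ∂P := by
  have : IsProbabilityMeasure (R.tilted u) := isProbabilityMeasure_tilted hu_exp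
  have h_gibbs := InformationTheory.integral_llr_add_sub_measure_univ_nonneg
    (hPR.trans (absolutelyContinuous_tilted hu_exp))
    (integrable_llr_tilted_right hPR hu h_llr hu_exp)
  rw [integral_llr_tilted_right hPR hu hu_exp h_llr] at h_gibbs
  simp only [probReal_univ] at h_gibbs
  linarith

lemma integral_sub_log_lintegral_exp_le_relEntropy (hPR : P ≪ R) {u : Ω → ℝ}
    (hu_meas : AEMeasurable u R) (hu : Integrable u P) :
    ((∫ ω, u ω ∂P : ℝ) : EReal) - ENNReal.log (∫⁻ ω, ENNReal.ofReal (exp (u ω)) ∂ R)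
      ≤ relEntropy P R := by
  rw [relEntropy_of_absolutelyContinuous hPR]
  split_ifs with h_llr
  swap
  · exact le_top
  by_cases hu_exp : Integrable (fun ω ↦ exp (u ω)) R
  · rw [← ofReal_integral_eq_lintegral_ofReal hu_exp (ae_of_all _ fun ω ↦ (exp_pos _).le),
      ENNReal.log_ofReal_of_pos (integral_exp_pos hu_exp), ← EReal.coe_sub, EReal.coe_le_coe_iff]
    exact integral_sub_log_integral_exp_le_integral_llr hPR h_llr hu hu_exp
  · rw [← lintegral_ofReal_ne_top_iff_integrable (f := fun ω ↦ exp (u ω))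
      (measurable_exp.comp_aemeasurable hu_meas).aestronglyMeasurable
      (ae_of_all _ fun ω ↦ (exp_pos _).le), not_not] at hu_exp
    rw [hu_exp, ENNReal.log_top, EReal.sub_top]
    exact bot_le

lemma log_lintegral_exp_truncLog_rnDeriv_le (c : ℝ) :
    ENNReal.log (∫⁻ ω, ENNReal.ofReal (exp (truncLog c (P.rnDeriv R ω).toReal)) ∂ R)
      ≤ log (1 + exp (-c)) := by
  have h_pointwise : ∀ ω, ENNReal.ofReal (exp (truncLog c (P.rnDeriv R ω).toReal))
      ≤ P.rnDeriv R ω + ENNReal.ofReal (exp (-c)) := fun ω ↦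
    calc ENNReal.ofReal (exp (truncLog c (P.rnDeriv R ω).toReal))
        ≤ ENNReal.ofReal ((P.rnDeriv R ω).toReal + exp (-c)) :=
          ENNReal.ofReal_le_ofReal (exp_truncLog_le c ENNReal.toReal_nonneg)
      _ ≤ P.rnDeriv R ω + ENNReal.ofReal (exp (-c)) := by
          rw [ENNReal.ofReal_add ENNReal.toReal_nonneg (exp_pos _).le]
          exact add_le_add_left ENNReal.ofReal_toReal_le _
  have h_lintegral : ∫⁻ ω, ENNReal.ofReal (exp (truncLog c (P.rnDeriv R ω).toReal)) ∂ R
      ≤ ENNReal.ofReal (1 + exp (-c)) :=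
    calc _ ≤ ∫⁻ ω, (P.rnDeriv R ω + ENNReal.ofReal (exp (-c))) ∂ R := lintegral_mono h_pointwise
      _ = ∫⁻ ω, P.rnDeriv R ω ∂ R + ENNReal.ofReal (exp (-c)) := by
          rw [lintegral_add_right _ measurable_const, lintegral_const, measure_univ, mul_one]
      _ ≤ 1 + ENNReal.ofReal (exp (-c)) := by
          gcongr
          exact Measure.lintegral_rnDeriv_le.trans_eq measure_univ
      _ = ENNReal.ofReal (1 + exp (-c)) := by
          rw [ENNReal.ofReal_add zero_le_one (exp_pos _).le, ENNReal.ofReal_one]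
  rw [← ENNReal.log_ofReal_of_pos (by positivity)]
  exact ENNReal.log_le_log h_lintegral

lemma integral_min_llr_sub_log_le (hPR : P ≪ R) {c : ℝ} (hc : 0 ≤ c) :
    ((∫ ω, min (llr P R ω) c ∂P - log (1 + exp (-c)) : ℝ) : EReal)
      ≤ ((∫ ω, truncLog c (P.rnDeriv R ω).toReal ∂P : ℝ) : EReal)
        - ENNReal.log (∫⁻ ω, ENNReal.ofReal (exp (truncLog c (P.rnDeriv R ω).toReal)) ∂ R) := by
  rw [EReal.coe_sub]
  exact EReal.sub_le_sub (EReal.coe_le_coe_iff.2 (integral_min_llr_le_integral_truncLog hPR hc))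
    (log_lintegral_exp_truncLog_rnDeriv_le c)

end RelEntropy

/-- The supremum over all measurable `u : Ω → ℝ` that are `P`-essentially bounded
(`‖u‖_{L^∞(P)} < ∞`) of `∫ u dP − log ∫ e^u dR` equals the relative entropy `H(P|R)`.
Here `log ∫ e^u dR` is taken in `(−∞,∞]` (via `ENNReal.log` of the lower integral of
`e^u`), and in `EReal` the difference is `−∞` when `∫ e^u dR = ∞`. -/
theorem sup_essBounded_eq_relEntropy {Ω : Type*} [MeasurableSpace Ω]
    (P R : Measure Ω) [IsProbabilityMeasure P] [IsProbabilityMeasure R] (hPR : P ≪ R) :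
    sSup {x : EReal | ∃ u : Ω → ℝ, Measurable u ∧ eLpNorm u ⊤ P < ⊤ ∧
        x = ((∫ ω, u ω ∂P : ℝ) : EReal)
              - ENNReal.log (∫⁻ ω, ENNReal.ofReal (Real.exp (u ω)) ∂ R)} =
      relEntropy P R := by
  refine le_antisymm (sSup_le ?_) ?_
  · rintro _ ⟨u, hu, hu_bdd, rfl⟩
    exact integral_sub_log_lintegral_exp_le_relEntropy hPR hu.aemeasurable
      (MemLp.integrable le_top ⟨hu.aestronglyMeasurable, hu_bdd⟩)
  · refine le_of_tendsto' (tendsto_integral_min_llr_sub_log hPR) fun n ↦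
      (integral_min_llr_sub_log_le hPR n.cast_nonneg).trans (le_sSup ?_)
    exact ⟨_, measurable_truncLog_rnDeriv P R n,
      (memLp_top_truncLog_rnDeriv n.cast_nonneg).eLpNorm_lt_top, rfl⟩
end

section
/- Let R be a probability measure on a measurable space Ω and let P be a probability measure on Ω with P ≪ R and H(P|R) < ∞. Define u* : Ω → [−∞, ∞) by u* := log(dP/dR) on the set {dP/dR > 0} and u* := −∞ on {dP/dR = 0}, with the convention e^{−∞} = 0. Then ∫ e^{u*} dR = 1 and ∫ u* dP − log ∫ e^{u*} dR = H(P|R); in particular the supremum sup { ∫ u dP − log ∫ e^u dR : u : Ω → [−∞, ∞) measurable, ∫ e^u dR < ∞ } is attained at u*. -/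
open MeasureTheory Real Filter Classical
open scoped ENNReal

/-- The nonnegative part of an extended real number, valued in `ℝ≥0∞`
(`⊥ ↦ 0`, `⊤ ↦ ∞`, `x ↦ max x 0`). -/
noncomputable def erealPosPart : EReal → ℝ≥0∞
  | ⊥ => 0
  | ⊤ => ⊤
  | (x : ℝ) => ENNReal.ofReal x

/-- For a `[−∞,∞)`-valued function `u`, the integral `∫ u dP ∈ [−∞,∞]` encoded in
`EReal` as `∫⁻ u⁺ dP − ∫⁻ u⁻ dP`. -/
noncomputable def erealIntegral {Ω : Type*} [MeasurableSpace Ω] (P : Measure Ω)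
    (u : Ω → EReal) : EReal :=
  ((∫⁻ ω, erealPosPart (u ω) ∂P : ℝ≥0∞) : EReal)
    - ((∫⁻ ω, erealPosPart (-(u ω)) ∂P : ℝ≥0∞) : EReal)

/-- The optimizer `u* : Ω → [−∞,∞)`: `u* = log(dP/dR)` on `{dP/dR > 0}` and
`u* = −∞` on `{dP/dR = 0}`. -/
noncomputable def uStar {Ω : Type*} [MeasurableSpace Ω] (P R : Measure Ω) : Ω → EReal :=
  fun ω => if P.rnDeriv R ω = 0 then (⊥ : EReal)
    else ((Real.log ((P.rnDeriv R ω).toReal) : ℝ) : EReal)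

/-! Since `dP/dR < ∞` `R`-a.e., `e^{u*} = dP/dR` `R`-a.e., so `∫ e^{u*} dR = P(Ω) = 1`. Since
`dP/dR > 0` `P`-a.e., `u*` agrees `P`-a.e. with the real-valued `llr P R`, which is `P`-integrable
when `H(P|R) < ∞`; its `EReal` integral is then the Bochner integral `∫ llr P R dP = H(P|R)`. -/

theorem erealPosPart_coe (x : ℝ) : erealPosPart (x : EReal) = ENNReal.ofReal x := rfl

section erealIntegral

variable {Ω : Type*} [MeasurableSpace Ω] {μ : Measure Ω}

theorem erealIntegral_congr_ae {u v : Ω → EReal} (h : u =ᵐ[μ] v) :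
    erealIntegral μ u = erealIntegral μ v := by
  rw [erealIntegral, erealIntegral,
    lintegral_congr_ae (h.mono fun ω hω => congrArg erealPosPart hω),
    lintegral_congr_ae (h.mono fun ω hω => congrArg (fun x => erealPosPart (-x)) hω)]

theorem erealIntegral_coe_of_integrable {f : Ω → ℝ} (hf : Integrable f μ) :
    erealIntegral μ (fun ω => (f ω : EReal)) = ((∫ ω, f ω ∂μ : ℝ) : EReal) := by
  simp only [erealIntegral, ← EReal.coe_neg, erealPosPart_coe]
  have hneg : ∫⁻ ω, ENNReal.ofReal (-f ω) ∂μ ≠ ∞ := hf.neg.lintegral_lt_top.ne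
  rw [integral_eq_lintegral_pos_part_sub_lintegral_neg_part hf, EReal.coe_sub,
    EReal.coe_ennreal_toReal hf.lintegral_lt_top.ne, EReal.coe_ennreal_toReal hneg]

end erealIntegral

section uStar

variable {Ω : Type*} [MeasurableSpace Ω] {P R : Measure Ω}

theorem integrable_llr_of_relEntropy_lt_top (hH : relEntropy P R < ⊤) :
    Integrable (llr P R) P := by
  by_contra h
  rw [relEntropy, if_neg fun hc => h hc.2] at hH
  exact lt_irrefl _ hH

theorem relEntropy_eq_integral_llr (hPR : P ≪ R) (hint : Integrable (llr P R) P) :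
    relEntropy P R = ((∫ ω, llr P R ω ∂P : ℝ) : EReal) :=
  if_pos ⟨hPR, hint⟩

theorem exp_uStar_ae_eq_rnDeriv [SigmaFinite P] :
    (fun ω => (uStar P R ω).exp) =ᵐ[R] P.rnDeriv R := by
  filter_upwards [Measure.rnDeriv_lt_top P R] with ω hω
  by_cases h0 : P.rnDeriv R ω = 0
  · simp [uStar, h0]
  · rw [uStar, if_neg h0, EReal.exp_coe, Real.exp_log (ENNReal.toReal_pos h0 hω.ne),
      ENNReal.ofReal_toReal hω.ne]

theorem lintegral_exp_uStar [SigmaFinite P] [P.HaveLebesgueDecomposition R] (hPR : P ≪ R) :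
    ∫⁻ ω, (uStar P R ω).exp ∂ R = P Set.univ := by
  rw [lintegral_congr_ae exp_uStar_ae_eq_rnDeriv, Measure.lintegral_rnDeriv hPR]

theorem uStar_ae_eq_llr [P.HaveLebesgueDecomposition R] (hPR : P ≪ R) :
    uStar P R =ᵐ[P] fun ω => (llr P R ω : EReal) := by
  filter_upwards [Measure.rnDeriv_pos hPR] with ω hω
  rw [uStar, if_neg hω.ne', llr_def]

end uStar

/-- For `P ≪ R` with `H(P|R) < ∞`, the function `u* = 𝟙_{dP/dR>0} log(dP/dR) − ∞·𝟙_{dP/dR=0}`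
(so that `e^{u*} = dP/dR`) satisfies `∫ e^{u*} dR = 1` and
`∫ u* dP − log ∫ e^{u*} dR = H(P|R)`; in particular the supremum in the variational
representation of the entropy is attained at `u*`. -/
theorem uStar_attains_sup {Ω : Type*} [MeasurableSpace Ω]
    (P R : Measure Ω) [IsProbabilityMeasure P] [IsProbabilityMeasure R] (hPR : P ≪ R)
    (hH : relEntropy P R < ⊤) :
    (MeasureTheory.lintegral R (fun ω => (uStar P R ω).exp)) = 1 ∧
    erealIntegral P (uStar P R) - ENNReal.log (MeasureTheory.lintegral R (fun ω => (uStar P R ω).exp))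
      = relEntropy P R := by
  have hint := integrable_llr_of_relEntropy_lt_top hH
  have hnorm : ∫⁻ ω, (uStar P R ω).exp ∂ R = 1 := by
    rw [lintegral_exp_uStar hPR, measure_univ]
  refine ⟨hnorm, ?_⟩
  rw [hnorm, ENNReal.log_one, sub_zero, erealIntegral_congr_ae (uStar_ae_eq_llr hPR),
    erealIntegral_coe_of_integrable hint, relEntropy_eq_integral_llr hPR hint]
end
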